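/- Let D be a normalized dictionary in a Hilbert space H. Let f ∈ H, and let (f_k) be the approximations produced by Weak Orthogonal Matching Pursuit with weakness parameter κ ∈ (0,1], residuals r_k = f - f_k, and selected index sets S_k = {γ_1,…,γ_k}. Let g = Φz with z finitely supported on a set T not contained in S_k, and let δ := δ_{#(T∪S_k)} be the RIP constant of order #(T∪S_k), assumed < 1. Then ‖r_{k+1}‖² ≤ ‖r_k‖² − (κ²(1−δ)/#(T\S_k)) · max{0, ‖r_k‖² − ‖f−g‖²}. -/

import Mathlib

/-!
The atom chosen at step `k + 1` lies in `F_{k+1}`, so projecting onto `F_{k+1}` removes at least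
the energy `⟨r_k, φ_{γ_{k+1}}⟩²` of the residual. To bound it from below, write `f_k = Φw` with `w`
supported on `S_k`. Since `r_k ⊥ F_k`, the RIP lower bound for `z - w` and the expansion of
`‖g - f_k‖² = ‖r_k - (f - g)‖²` give `(1 - δ) ∑_{T \ S_k} z_γ² ≤ 2⟨r_k, g⟩ - (‖r_k‖² - ‖f - g‖²)`,
while `⟨r_k, g⟩ = ∑_{T \ S_k} z_γ ⟨r_k, φ_γ⟩` is controlled by Cauchy–Schwarz. Together they yield
`(1 - δ)(‖r_k‖² - ‖f - g‖²) ≤ ∑_{T \ S_k} ⟨r_k, φ_γ⟩²`, and the weak greedy rule bounds each term of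
this sum by `⟨r_k, φ_{γ_{k+1}}⟩² / κ²`.
-/

open scoped RealInnerProductSpace BigOperators

/-- The synthesis operator of a dictionary: `Φ c = ∑ γ c_γ φ_γ`. -/
noncomputable def dictSum {Γ H : Type*} [NormedAddCommGroup H] [InnerProductSpace ℝ H]
    (φ : Γ → H) (c : Γ →₀ ℝ) : H :=
  c.sum fun γ a => a • φ γ

/-- The squared ℓ² norm of a finitely supported sequence. -/
noncomputable def l2normSq {Γ : Type*} (c : Γ →₀ ℝ) : ℝ :=
  ∑ γ ∈ c.support, (c γ) ^ 2

/-- The restricted isometry property of order `m` with constant `δ`. -/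
def RIP {Γ H : Type*} [NormedAddCommGroup H] [InnerProductSpace ℝ H]
    (φ : Γ → H) (m : ℕ) (δ : ℝ) : Prop :=
  ∀ c : Γ →₀ ℝ, c.support.card ≤ m →
    (1 - δ) * l2normSq c ≤ ‖dictSum φ c‖ ^ 2 ∧
    ‖dictSum φ c‖ ^ 2 ≤ (1 + δ) * l2normSq c

lemma mul_le_of_mul_le_two_mul_sub {c D Z U t : ℝ} (hc : 0 ≤ c) (hZ : 0 ≤ Z) (hU : 0 ≤ U)
    (hlin : c * Z ≤ 2 * t - D) (hCS : t ^ 2 ≤ Z * U) : c * D ≤ U := by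
  rcases le_or_gt D 0 with hD | hD
  · nlinarith
  rcases hZ.eq_or_lt with rfl | hZ
  · nlinarith
  -- `4 t² ≥ (D + cZ)² ≥ 4 cDZ` by AM-GM, and `t² ≤ ZU`.
  nlinarith [sq_nonneg (D - c * Z), mul_nonneg hc hZ.le]

lemma sq_mul_sum_sq_le_card_mul_sq {ι : Type*} (s : Finset ι) {κ b : ℝ} {a : ι → ℝ} (hκ : 0 ≤ κ)
    (h : ∀ i, κ * |a i| ≤ |b|) : κ ^ 2 * ∑ i ∈ s, a i ^ 2 ≤ s.card * b ^ 2 := by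
  rw [Finset.mul_sum, ← nsmul_eq_mul, ← Finset.sum_const]
  refine Finset.sum_le_sum fun i _ => ?_
  rw [← sq_abs (a i), ← sq_abs b, ← mul_pow]
  exact pow_le_pow_left₀ (mul_nonneg hκ (abs_nonneg _)) (h i) 2

section InnerProductSpace

variable {H : Type*} [NormedAddCommGroup H] [InnerProductSpace ℝ H]

lemma norm_sub_sq_le_of_inner_eq_zero {K : Submodule ℝ H} {f p v : H} (hp : p ∈ K)
    (horth : ∀ u ∈ K, ⟪f - p, u⟫ = 0) (hv : v ∈ K) : ‖f - p‖ ^ 2 ≤ ‖f - v‖ ^ 2 := by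
  have hpv : ⟪f - p, p - v⟫ = 0 := horth _ (K.sub_mem hp hv)
  rw [show f - v = (f - p) + (p - v) by abel, norm_add_sq_real, hpv]
  nlinarith [sq_nonneg ‖p - v‖]

lemma norm_sub_inner_smul_sq {x e : H} (he : ‖e‖ = 1) :
    ‖x - ⟪x, e⟫ • e‖ ^ 2 = ‖x‖ ^ 2 - ⟪x, e⟫ ^ 2 := by
  rw [norm_sub_sq_real, real_inner_smul_right, norm_smul, he, Real.norm_eq_abs]
  ring_nf
  rw [sq_abs]
  ring

lemma norm_sub_sq_le_sub_inner_sq {K : Submodule ℝ H} {f p p' e : H} (hp : p ∈ K) (he : e ∈ K)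
    (he1 : ‖e‖ = 1) (hp' : p' ∈ K) (horth : ∀ u ∈ K, ⟪f - p', u⟫ = 0) :
    ‖f - p'‖ ^ 2 ≤ ‖f - p‖ ^ 2 - ⟪f - p, e⟫ ^ 2 := by
  calc ‖f - p'‖ ^ 2 ≤ ‖f - (p + ⟪f - p, e⟫ • e)‖ ^ 2 :=
        norm_sub_sq_le_of_inner_eq_zero hp' horth (K.add_mem hp (K.smul_mem _ he))
    _ = ‖f - p‖ ^ 2 - ⟪f - p, e⟫ ^ 2 := by
        rw [← sub_sub, norm_sub_inner_smul_sq he1]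

lemma norm_sub_sq_eq_two_inner_sub {f p g : H} (hp : ⟪f - p, p⟫ = 0) :
    ‖g - p‖ ^ 2 = 2 * ⟪f - p, g⟫ - ‖f - p‖ ^ 2 + ‖f - g‖ ^ 2 := by
  have hfg : ⟪f - p, f - g⟫ = ‖f - p‖ ^ 2 - ⟪f - p, g⟫ := by
    rw [show f - g = (f - p) + p - g by abel, inner_sub_right, inner_add_right, hp,
      real_inner_self_eq_norm_sq, add_zero]
  rw [show g - p = (f - p) - (f - g) by abel, norm_sub_sq_real, hfg]
  ring

end InnerProductSpace

section Dictionary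

variable {Γ H : Type*} [NormedAddCommGroup H] [InnerProductSpace ℝ H] {φ : Γ → H}

lemma dictSum_eq_linearCombination (φ : Γ → H) (c : Γ →₀ ℝ) :
    dictSum φ c = Finsupp.linearCombination ℝ φ c :=
  (Finsupp.linearCombination_apply ℝ c).symm

lemma exists_dictSum_eq_of_mem_span {S : Finset Γ} {p : H}
    (hp : p ∈ Submodule.span ℝ (φ '' (S : Set Γ))) :
    ∃ w : Γ →₀ ℝ, w.support ⊆ S ∧ dictSum φ w = p := by
  obtain ⟨w, hw, rfl⟩ := (Finsupp.mem_span_image_iff_linearCombination ℝ).mp hp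
  exact ⟨w, by exact_mod_cast (Finsupp.mem_supported ℝ w).mp hw,
    dictSum_eq_linearCombination φ w⟩

lemma inner_dictSum (u : H) (c : Γ →₀ ℝ) :
    ⟪u, dictSum φ c⟫ = ∑ γ ∈ c.support, c γ * ⟪u, φ γ⟫ := by
  simp only [dictSum, Finsupp.sum, inner_sum, real_inner_smul_right]

lemma inner_dictSum_eq_sum_sdiff [DecidableEq Γ] {u : H} {c : Γ →₀ ℝ} {S T : Finset Γ}
    (hc : c.support ⊆ T) (hu : ∀ γ ∈ S, ⟪u, φ γ⟫ = 0) :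
    ⟪u, dictSum φ c⟫ = ∑ γ ∈ T \ S, c γ * ⟪u, φ γ⟫ := by
  rw [inner_dictSum, Finset.sum_subset hc fun γ _ hγ => by
    rw [Finsupp.notMem_support_iff.mp hγ, zero_mul]]
  refine (Finset.sum_subset Finset.sdiff_subset fun γ hγT hγ => ?_).symm
  rw [hu γ (by simpa [hγT] using hγ), mul_zero]

lemma sum_sq_le_l2normSq (c : Γ →₀ ℝ) (s : Finset Γ) : ∑ γ ∈ s, c γ ^ 2 ≤ l2normSq c := by
  classical
  calc ∑ γ ∈ s, c γ ^ 2 ≤ ∑ γ ∈ s ∪ c.support, c γ ^ 2 :=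
        Finset.sum_le_sum_of_subset_of_nonneg Finset.subset_union_left fun _ _ _ => sq_nonneg _
    _ = l2normSq c := (Finset.sum_subset Finset.subset_union_right fun γ _ hγ => by
        rw [Finsupp.notMem_support_iff.mp hγ, sq, zero_mul]).symm

-- Apply the RIP lower bound to `c - w`, where `p = Φ w` with `w` supported on `S`.
lemma RIP.one_sub_mul_sum_sdiff_sq_le [DecidableEq Γ] {S T : Finset Γ} {δ : ℝ}
    (hRIP : RIP φ (T ∪ S).card δ) (hδ : δ ≤ 1) {c : Γ →₀ ℝ} (hc : c.support ⊆ T) {p : H}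
    (hp : p ∈ Submodule.span ℝ (φ '' (S : Set Γ))) :
    (1 - δ) * ∑ γ ∈ T \ S, c γ ^ 2 ≤ ‖dictSum φ c - p‖ ^ 2 := by
  obtain ⟨w, hwS, rfl⟩ := exists_dictSum_eq_of_mem_span hp
  have hsupp : (c - w).support ⊆ T ∪ S :=
    Finsupp.support_sub.trans (Finset.union_subset_union hc hwS)
  have hcw : ∑ γ ∈ T \ S, c γ ^ 2 = ∑ γ ∈ T \ S, (c - w) γ ^ 2 :=
    Finset.sum_congr rfl fun γ hγ => by
      rw [Finsupp.sub_apply, Finsupp.notMem_support_iff.mp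
        fun h => (Finset.mem_sdiff.mp hγ).2 (hwS h), sub_zero]
  calc (1 - δ) * ∑ γ ∈ T \ S, c γ ^ 2 ≤ (1 - δ) * l2normSq (c - w) := by
        rw [hcw]
        exact mul_le_mul_of_nonneg_left (sum_sq_le_l2normSq _ _) (by linarith)
    _ ≤ ‖dictSum φ (c - w)‖ ^ 2 := (hRIP _ (Finset.card_le_card hsupp)).1
    _ = ‖dictSum φ c - dictSum φ w‖ ^ 2 := by
        simp only [dictSum_eq_linearCombination, map_sub]

lemma RIP.one_sub_mul_le_sum_sdiff_inner_sq [DecidableEq Γ] {S T : Finset Γ} {δ : ℝ}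
    (hRIP : RIP φ (T ∪ S).card δ) (hδ : δ ≤ 1) {c : Γ →₀ ℝ} (hc : c.support ⊆ T) {f p : H}
    (hp : p ∈ Submodule.span ℝ (φ '' (S : Set Γ)))
    (horth : ∀ v ∈ Submodule.span ℝ (φ '' (S : Set Γ)), ⟪f - p, v⟫ = 0) :
    (1 - δ) * (‖f - p‖ ^ 2 - ‖f - dictSum φ c‖ ^ 2) ≤ ∑ γ ∈ T \ S, ⟪f - p, φ γ⟫ ^ 2 := by
  have hinner := inner_dictSum_eq_sum_sdiff (u := f - p) hc fun γ hγ =>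
    horth _ (Submodule.subset_span ⟨γ, hγ, rfl⟩)
  refine mul_le_of_mul_le_two_mul_sub (Z := ∑ γ ∈ T \ S, c γ ^ 2) (t := ⟪f - p, dictSum φ c⟫)
    (by linarith) (Finset.sum_nonneg fun _ _ => sq_nonneg _)
    (Finset.sum_nonneg fun _ _ => sq_nonneg _) ?_ ?_
  · calc (1 - δ) * ∑ γ ∈ T \ S, c γ ^ 2 ≤ ‖dictSum φ c - p‖ ^ 2 :=
          hRIP.one_sub_mul_sum_sdiff_sq_le hδ hc hp
      _ = _ := by rw [norm_sub_sq_eq_two_inner_sub (horth p hp)]; ring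
  · rw [hinner]
    exact Finset.sum_mul_sq_le_sq_mul_sq _ _ _

end Dictionary

-- `γseq k` is the index selected at step `k + 1`.
theorem stmt5_WOMP_one_step_reduction_general
    {Γ H : Type*} [DecidableEq Γ]
    [NormedAddCommGroup H] [InnerProductSpace ℝ H]
    (φ : Γ → H) (hnorm : ∀ γ, ‖φ γ‖ = 1)
    (κ : ℝ) (hκ : 0 < κ)
    (f : H) (γseq : ℕ → Γ) (fk : ℕ → H)
    (S : ℕ → Finset Γ) (hS : ∀ k, S k = (Finset.range k).image γseq)
    (r : ℕ → H) (hr : ∀ k, r k = f - fk k)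
    -- `fk k` is the orthogonal projection of `f` onto `F_k = span{φ_γ : γ ∈ S k}`
    (hproj_mem : ∀ k, fk k ∈ Submodule.span ℝ (φ '' (S k : Set Γ)))
    (hproj_orth : ∀ k, ∀ v ∈ Submodule.span ℝ (φ '' (S k : Set Γ)), ⟪r k, v⟫ = 0)
    -- weak greedy selection rule
    (hselect : ∀ k, ∀ γ' : Γ, κ * |⟪r k, φ γ'⟫| ≤ |⟪r k, φ (γseq k)⟫|)
    -- `g = Φz` with `z` supported on `T`, `T` not contained in `S k`
    (k : ℕ) (z : Γ →₀ ℝ) (T : Finset Γ) (hzT : z.support ⊆ T)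
    (g : H) (hg : g = dictSum φ z)
    (hTS : ¬ (T : Set Γ) ⊆ (S k : Set Γ))
    (δ : ℝ) (hδ : δ < 1) (hRIP : RIP φ (T ∪ S k).card δ) :
    ‖r (k + 1)‖ ^ 2
      ≤ ‖r k‖ ^ 2
        - κ ^ 2 * (1 - δ) / ((T \ S k).card : ℝ)
          * max 0 (‖r k‖ ^ 2 - ‖f - g‖ ^ 2) := by
  have hSmono : S k ⊆ S (k + 1) := by
    rw [hS, hS]
    exact Finset.image_subset_image (Finset.range_subset_range.mpr k.le_succ)
  have hsel_mem : φ (γseq k) ∈ Submodule.span ℝ (φ '' (S (k + 1) : Set Γ)) :=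
    Submodule.subset_span ⟨γseq k, by
      rw [hS]; exact Finset.mem_image_of_mem _ (Finset.self_mem_range_succ k), rfl⟩
  simp only [hr] at hselect hproj_orth ⊢
  have hstep := norm_sub_sq_le_sub_inner_sq (Submodule.span_mono (Set.image_mono
    (Finset.coe_subset.mpr hSmono)) (hproj_mem k)) hsel_mem (hnorm _) (hproj_mem (k + 1))
    (hproj_orth (k + 1))
  have hcard : (0 : ℝ) < (T \ S k).card := by
    exact_mod_cast Finset.card_pos.mpr (Finset.sdiff_nonempty.mpr
      fun h => hTS (Finset.coe_subset.mpr h))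
  have hgain : (1 - δ) * (‖f - fk k‖ ^ 2 - ‖f - g‖ ^ 2) * κ ^ 2
      ≤ (T \ S k).card * ⟪f - fk k, φ (γseq k)⟫ ^ 2 := by
    rw [hg]
    calc _ ≤ (∑ γ ∈ T \ S k, ⟪f - fk k, φ γ⟫ ^ 2) * κ ^ 2 := mul_le_mul_of_nonneg_right
          (hRIP.one_sub_mul_le_sum_sdiff_inner_sq hδ.le hzT (hproj_mem k) (hproj_orth k))
          (sq_nonneg κ)
      _ ≤ _ := by rw [mul_comm]; exact sq_mul_sum_sq_le_card_mul_sq _ hκ.le (hselect k)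
  have hbound : κ ^ 2 * (1 - δ) / (T \ S k).card * max 0 (‖f - fk k‖ ^ 2 - ‖f - g‖ ^ 2)
      ≤ ⟪f - fk k, φ (γseq k)⟫ ^ 2 := by
    rw [mul_max_of_nonneg _ _ (div_nonneg (mul_nonneg (sq_nonneg κ) (by linarith)) hcard.le),
      mul_zero]
    refine max_le (sq_nonneg _) ?_
    rw [div_mul_eq_mul_div, div_le_iff₀ hcard]
    linarith
  linarith

/-- One-step residual reduction for WOMP (Zhang's lemma).
`γseq k` is the index selected at step `k+1`, `S k = {γseq 0, …, γseq (k-1)}` the set of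
indices selected after `k` steps, `fk k` the orthogonal projection of `f` onto
`span {φ_γ : γ ∈ S k}` and `r k = f - fk k` the residual. -/
theorem stmt5_WOMP_one_step_reduction
    {Γ H : Type*} [Countable Γ] [DecidableEq Γ]
    [NormedAddCommGroup H] [InnerProductSpace ℝ H] [CompleteSpace H]
    (φ : Γ → H) (hnorm : ∀ γ, ‖φ γ‖ = 1)
    (κ : ℝ) (hκ : 0 < κ) (hκ1 : κ ≤ 1)
    (f : H) (γseq : ℕ → Γ) (fk : ℕ → H)
    (S : ℕ → Finset Γ) (hS : ∀ k, S k = (Finset.range k).image γseq)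
    (r : ℕ → H) (hr : ∀ k, r k = f - fk k)
    -- `fk k` is the orthogonal projection of `f` onto `F_k = span{φ_γ : γ ∈ S k}`
    (hproj_mem : ∀ k, fk k ∈ Submodule.span ℝ (φ '' (S k : Set Γ)))
    (hproj_orth : ∀ k, ∀ v ∈ Submodule.span ℝ (φ '' (S k : Set Γ)), ⟪r k, v⟫ = 0)
    -- weak greedy selection rule
    (hselect : ∀ k, ∀ γ' : Γ, κ * |⟪r k, φ γ'⟫| ≤ |⟪r k, φ (γseq k)⟫|)
    -- `g = Φz` with `z` supported on `T`, `T` not contained in `S k`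
    (k : ℕ) (z : Γ →₀ ℝ) (T : Finset Γ) (hzT : z.support ⊆ T)
    (g : H) (hg : g = dictSum φ z)
    (hTS : ¬ (T : Set Γ) ⊆ (S k : Set Γ))
    (δ : ℝ) (hδ : δ < 1) (hRIP : RIP φ (T ∪ S k).card δ) :
    ‖r (k + 1)‖ ^ 2
      ≤ ‖r k‖ ^ 2
        - κ ^ 2 * (1 - δ) / ((T \ S k).card : ℝ)
          * max 0 (‖r k‖ ^ 2 - ‖f - g‖ ^ 2) :=
  stmt5_WOMP_one_step_reduction_general φ hnorm κ hκ f γseq fk S hS r hr hproj_mem hproj_orth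
    hselect k z T hzT g hg hTS δ hδ hRIP
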